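/- Let (V, M) be a valuation domain with residue field k and fraction field K, let π : V → k be the residue map, and let D be an integral domain that is a subring of k. Then every (D ×_k V)-submodule of K is comparable with V with respect to inclusion: for every π⁻¹(D)-submodule N of K, either N ⊆ V or V ⊆ N. -/

import Mathlib

/-!
If a submodule `N` is not contained in `V`, pick `x ∈ N \ V`. Then `x⁻¹ = u` lies in the maximal
ideal `M`, and every `v ∈ V` is `(v u) • x` with `v u ∈ M ⊆ π⁻¹(0) ⊆ π⁻¹(D)`, so `V ⊆ N`.
-/

theorem ValuationRing.exists_mem_maximalIdeal_mul_eq_one_of_notMem_range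
    {V K : Type*} [CommRing V] [IsDomain V] [ValuationRing V]
    [Field K] [Algebra V K] [IsFractionRing V K] {x : K}
    (hx : x ∉ Set.range (algebraMap V K)) :
    ∃ u ∈ IsLocalRing.maximalIdeal V, algebraMap V K u * x = 1 := by
  have hx0 : x ≠ 0 := fun h => hx ⟨0, by simp [h]⟩
  obtain hxV | ⟨u, hu⟩ := ValuationRing.isInteger_or_isInteger V x
  · exact absurd hxV hx
  refine ⟨u, fun hunit => hx ?_, by rw [hu, inv_mul_cancel₀ hx0]⟩
  refine ⟨↑hunit.unit⁻¹, ?_⟩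
  rw [← mul_one (algebraMap V K _), ← inv_mul_cancel₀ hx0, ← hu, ← mul_assoc, ← map_mul,
    IsUnit.val_inv_mul, map_one, one_mul]

theorem range_algebraMap_subset_of_mul_eq_one {V K : Type*} [CommRing V] [CommRing K]
    [Algebra V K] {S : Subring V} {I : Ideal V} (hIS : (I : Set V) ⊆ S) (N : Submodule S K)
    {x : K} {u : V} (hx : x ∈ N) (hu : u ∈ I) (hux : algebraMap V K u * x = 1) :
    Set.range (algebraMap V K) ⊆ N := by
  rintro _ ⟨v, rfl⟩
  have hvu : v * u ∈ S := hIS (I.mul_mem_left v hu)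
  have hv : (⟨v * u, hvu⟩ : S) • x = algebraMap V K v := by
    change (v * u) • x = _
    rw [Algebra.smul_def, map_mul, mul_assoc, hux, mul_one]
  exact hv ▸ N.smul_mem _ hx

theorem RingHom.ker_subset_comap {R S : Type*} [Ring R] [Ring S] (f : R →+* S) (D : Subring S) :
    (RingHom.ker f : Set R) ⊆ D.comap f :=
  fun _ h => by simp [(RingHom.mem_ker).1 h, D.zero_mem]

/-- Let `(V, M)` be a valuation domain with residue field `k`, residue map `π`, and
fraction field `K`, and let `D` be an integral domain that is a subring of `k`. Then every
`π⁻¹(D)`-submodule of `K` is comparable with `V` with respect to inclusion. -/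
theorem stmt_7 {V K k : Type*} [CommRing V] [IsDomain V] [ValuationRing V]
    [Field K] [Algebra V K] [IsFractionRing V K] [Field k]
    (π : V →+* k)
    (hker : RingHom.ker π = IsLocalRing.maximalIdeal V)
    (D : Subring k) :
    ∀ N : Submodule (D.comap π) K,
      (N : Set K) ⊆ Set.range (algebraMap V K) ∨ Set.range (algebraMap V K) ⊆ (N : Set K) := by
  intro N
  refine or_iff_not_imp_left.2 fun hN => ?_
  obtain ⟨x, hxN, hxV⟩ := Set.not_subset.1 hN
  obtain ⟨u, hu, hux⟩ := ValuationRing.exists_mem_maximalIdeal_mul_eq_one_of_notMem_range hxV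
  exact range_algebraMap_subset_of_mul_eq_one (hker ▸ π.ker_subset_comap D) N hxN hu hux
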